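/- arXiv:1410.7698 — 3 statements merged into one kernel-verified Lean document; each statement's English description precedes it below -/
import Mathlib

section
/- The four eigenvalues σ of the 4×4 matrix arising from the Δ₄ = 0 condition for the radial Teukolsky equation with s = -2 and a = 0 are σ = -1 ± √(1 + 12iω) and σ = -1 ± √(1 - 12iω); that is, the determinant condition factors as ((σ+1)² - (1+12iω))((σ+1)² - (1-12iω)) = 0. -/
open Complex Matrix

/-! Once its entries are simplified, the matrix is block lower triangular with 2×2 diagonal blocks
of determinants σ(σ + 2) ± 12iω = (σ + 1)² - (1 ∓ 12iω). Since `z ^ (1/2)` squares back to `z`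
for every complex `z`, each factor vanishes exactly when σ + 1 is `±(1 ∓ 12iω) ^ (1/2)`. -/

lemma Complex.cpow_one_half_sq (z : ℂ) : (z ^ ((1 : ℂ) / 2)) ^ 2 = z := by
  simp [one_div, cpow_ofNat_inv_pow]

lemma Complex.add_one_sq_eq_iff (σ c : ℂ) :
    (σ + 1) ^ 2 = c ↔ σ = -1 + c ^ ((1 : ℂ) / 2) ∨ σ = -1 - c ^ ((1 : ℂ) / 2) := by
  conv_lhs => rw [← cpow_one_half_sq c, sq_eq_sq_iff_eq_or_eq_neg]
  exact or_congr (by constructor <;> intro h <;> linear_combination h)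
    (by constructor <;> intro h <;> linear_combination h)

lemma Matrix.det_fin_four_of_upper_right_eq_zero {R : Type*} [CommRing R]
    (a b c d e f g h i j k l : R) :
    !![a, b, 0, 0; c, d, 0, 0; e, f, g, h; i, j, k, l].det = (a * d - b * c) * (g * l - h * k) := by
  simp [det_succ_row_zero, Fin.sum_univ_succ, Fin.succAbove]
  ring

/-- For s = -2 and ā = 0 (Schwarzschild), the determinant of the 4×4 matrix of the
Δ₄ = 0 polynomial-solution condition for the radial Teukolsky equation factors as
((σ+1)² - (1+12iω))((σ+1)² - (1-12iω)), so its four eigenvalues are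
σ = -1 ± √(1+12iω) and σ = -1 ± √(1-12iω). -/
theorem stmt_8 (ω σ : ℂ)
    (M : Matrix (Fin 4) (Fin 4) ℂ)
    (hM : M = !![-σ, 1 - 2 * I * ω + I * (2 * ω), 0, 0;
                 -12 * I * ω, -2 - σ, -4 * I * ω + 2 * I * (2 * ω), 0;
                 0, -8 * I * ω, -2 - σ, -3 - 6 * I * ω + 3 * I * (2 * ω);
                 0, 0, -4 * I * ω, -σ]) :
    M.det = ((σ + 1) ^ 2 - (1 + 12 * I * ω)) * ((σ + 1) ^ 2 - (1 - 12 * I * ω)) ∧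
    (M.det = 0 ↔
      σ = -1 + (1 + 12 * I * ω) ^ ((1 : ℂ) / 2) ∨ σ = -1 - (1 + 12 * I * ω) ^ ((1 : ℂ) / 2) ∨
      σ = -1 + (1 - 12 * I * ω) ^ ((1 : ℂ) / 2) ∨ σ = -1 - (1 - 12 * I * ω) ^ ((1 : ℂ) / 2)) := by
  have hM' : M = !![-σ, 1, 0, 0; -12 * I * ω, -2 - σ, 0, 0;
      0, -8 * I * ω, -2 - σ, -3; 0, 0, -4 * I * ω, -σ] := by
    rw [hM, show 1 - 2 * I * ω + I * (2 * ω) = 1 by ring, show -4 * I * ω + 2 * I * (2 * ω) = 0 by ring,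
      show -3 - 6 * I * ω + 3 * I * (2 * ω) = -3 by ring]
  have hdet : M.det = ((σ + 1) ^ 2 - (1 + 12 * I * ω)) * ((σ + 1) ^ 2 - (1 - 12 * I * ω)) := by
    rw [hM', det_fin_four_of_upper_right_eq_zero]
    ring
  refine ⟨hdet, ?_⟩
  rw [hdet, mul_eq_zero, sub_eq_zero, sub_eq_zero, add_one_sq_eq_iff, add_one_sq_eq_iff, or_assoc]
end

section
/- The function H(z) = z² - (ℓ(ℓ+1)/3) z³ satisfies the confluent Heun equation in nonsymmetrical canonical form with parameters p = iΩ̄, α = -3, γ = -1, δ = -1 + 4iΩ̄, and σ = σ₃₃ = -1 + √(1 + 12iΩ̄), where Ω̄ = -(i/12)(ℓ-1)ℓ(ℓ+1)(ℓ+2) and ℓ ≥ 2 is an integer. -/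
open Complex

theorem deriv_sq_sub_const_mul_cube {𝕜 : Type*} [NontriviallyNormedField 𝕜] (c : 𝕜) :
    deriv (fun z : 𝕜 => z ^ 2 - c * z ^ 3) = fun z => 2 * z - 3 * c * z ^ 2 := by
  funext z
  rw [deriv_fun_sub (by fun_prop) (by fun_prop), deriv_pow_field,
    deriv_const_mul _ (by fun_prop), deriv_pow_field]
  ring

theorem deriv_deriv_sq_sub_const_mul_cube {𝕜 : Type*} [NontriviallyNormedField 𝕜] (c : 𝕜) :
    deriv (deriv fun z : 𝕜 => z ^ 2 - c * z ^ 3) = fun z => 2 - 6 * c * z := by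
  funext z
  rw [deriv_sq_sub_const_mul_cube, deriv_fun_sub (by fun_prop) (by fun_prop),
    deriv_const_mul _ (by fun_prop), deriv_const_mul _ (by fun_prop), deriv_pow_field,
    deriv_id'']
  ring

/-- Multiplied by `z (z - 1)` the left side becomes a quartic in `z` whose coefficients of
`z⁰, z, z², z³` vanish exactly because `γ = -1`, `δ = -1 + 4p`, `σ = 3c - 2` and `4p = σc`;
the `z⁴` coefficient cancels for any `p`. -/
theorem heun_sq_sub_cube_eq_zero {K : Type*} [Field K] [CharZero K] (L z : K)
    (hz0 : z ≠ 0) (hz1 : z ≠ 1) :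
    let c := L * (L + 1) / 3
    let p := (L - 1) * L * (L + 1) * (L + 2) / 12
    (2 - 6 * c * z) + (4 * p + -1 / z + (-1 + 4 * p) / (z - 1)) * (2 * z - 3 * c * z ^ 2)
      + (4 * -3 * p * z - (L ^ 2 + L - 2)) / (z * (z - 1)) * (z ^ 2 - c * z ^ 3) = 0 := by
  have hz1' : z - 1 ≠ 0 := sub_ne_zero.mpr hz1
  intro c p
  simp only [c, p]
  field_simp
  ring

theorem stmt_10_general (ℓ : ℕ) (Ω p α γ δ σ w : ℂ)
    (hΩ : Ω = -(I / 12) * ((ℓ : ℂ) - 1) * (ℓ : ℂ) * ((ℓ : ℂ) + 1) * ((ℓ : ℂ) + 2))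
    (hp : p = I * Ω) (hα : α = -3) (hγ : γ = -1) (hδ : δ = -1 + 4 * I * Ω)
    (hw' : w = (ℓ : ℂ) ^ 2 + (ℓ : ℂ) - 1)
    (hσ : σ = -1 + w)
    (H : ℂ → ℂ) (hH : H = fun z : ℂ => z ^ 2 - ((ℓ : ℂ) * ((ℓ : ℂ) + 1) / 3) * z ^ 3) :
    ∀ z : ℂ, z ≠ 0 → z ≠ 1 →
      deriv (deriv H) z + (4 * p + γ / z + δ / (z - 1)) * deriv H z
        + (4 * α * p * z - σ) / (z * (z - 1)) * H z = 0 := by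
  intro z hz0 hz1
  set L : ℂ := (ℓ : ℂ)
  have hIΩ : I * Ω = (L - 1) * L * (L + 1) * (L + 2) / 12 := by
    rw [hΩ]
    linear_combination (-((L - 1) * L * (L + 1) * (L + 2) / 12)) * I_mul_I
  have hδ' : δ = -1 + 4 * ((L - 1) * L * (L + 1) * (L + 2) / 12) := by
    rw [hδ, mul_assoc 4, hIΩ]
  have hσ' : σ = L ^ 2 + L - 2 := by rw [hσ, hw']; ring
  subst hH
  rw [deriv_deriv_sq_sub_const_mul_cube, deriv_sq_sub_const_mul_cube, hp, hIΩ, hα, hγ, hδ', hσ']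
  exact heun_sq_sub_cube_eq_zero L z hz0 hz1

/-- H(z) = z² - (ℓ(ℓ+1)/3) z³ satisfies the nonsymmetrical canonical confluent Heun
equation with parameters p = iΩ̄, α = -3, γ = -1, δ = -1 + 4iΩ̄,
σ = σ₃₃ = -1 + √(1+12iΩ̄) = ℓ(ℓ+1) - 2, where Ω̄ = -(i/12)(ℓ-1)ℓ(ℓ+1)(ℓ+2). -/
theorem stmt_10 (ℓ : ℕ) (hℓ : 2 ≤ ℓ) (Ω p α γ δ σ w : ℂ)
    (hΩ : Ω = -(I / 12) * ((ℓ : ℂ) - 1) * (ℓ : ℂ) * ((ℓ : ℂ) + 1) * ((ℓ : ℂ) + 2))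
    (hp : p = I * Ω) (hα : α = -3) (hγ : γ = -1) (hδ : δ = -1 + 4 * I * Ω)
    (hw : w ^ 2 = 1 + 12 * I * Ω) (hw' : w = (ℓ : ℂ) ^ 2 + (ℓ : ℂ) - 1)
    (hσ : σ = -1 + w)
    (H : ℂ → ℂ) (hH : H = fun z : ℂ => z ^ 2 - ((ℓ : ℂ) * ((ℓ : ℂ) + 1) / 3) * z ^ 3) :
    ∀ z : ℂ, z ≠ 0 → z ≠ 1 →
      deriv (deriv H) z + (4 * p + γ / z + δ / (z - 1)) * deriv H z
        + (4 * α * p * z - σ) / (z * (z - 1)) * H z = 0 :=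
  stmt_10_general ℓ Ω p α γ δ σ w hΩ hp hα hγ hδ hw' hσ H hH
end

section
/- The function H(z) = 1 - (ℓ(ℓ+1)/3) z satisfies the confluent Heun equation in nonsymmetrical canonical form with parameters p = iΩ̄, α = -1, γ = 3, δ = -1 + 4iΩ̄, and σ = 1 + √(1 + 12iΩ̄) = ℓ² + ℓ, where Ω̄ = -(i/12)(ℓ-1)ℓ(ℓ+1)(ℓ+2) and ℓ ≥ 2. -/
open Complex

noncomputable def confluentHeunLHS (p α γ δ σ : ℂ) (H : ℂ → ℂ) (z : ℂ) : ℂ :=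
  deriv (deriv H) z + (4 * p + γ / z + δ / (z - 1)) * deriv H z
    + (4 * α * p * z - σ) / (z * (z - 1)) * H z

lemma deriv_const_sub_mul {𝕜 : Type*} [NontriviallyNormedField 𝕜] (a c : 𝕜) :
    deriv (fun z : 𝕜 => a - c * z) = fun _ => -c := by
  funext z
  simp

/-- After multiplying by `z (z - 1)`, the `z²`-coefficient vanishes because `α = -1`, the constant
one because `γ = 3`, and the `z`-coefficient is `σ (σ - 2) / 3 - 4 p`. -/
theorem confluentHeunLHS_one_sub_mul_eq_zero {p σ z : ℂ} (hp : 12 * p = σ * (σ - 2))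
    (hz0 : z ≠ 0) (hz1 : z ≠ 1) :
    confluentHeunLHS p (-1) 3 (-1 + 4 * p) σ (fun z => 1 - σ / 3 * z) z = 0 := by
  have hz1' : z - 1 ≠ 0 := sub_ne_zero.mpr hz1
  simp only [confluentHeunLHS, deriv_const_sub_mul, deriv_const]
  field_simp
  linear_combination -z * hp

theorem stmt_11_general (ℓ : ℕ) (Ω p α γ δ σ w : ℂ)
    (hΩ : Ω = -(I / 12) * ((ℓ : ℂ) - 1) * (ℓ : ℂ) * ((ℓ : ℂ) + 1) * ((ℓ : ℂ) + 2))
    (hp : p = I * Ω) (hα : α = -1) (hγ : γ = 3) (hδ : δ = -1 + 4 * I * Ω)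
    (hw' : w = (ℓ : ℂ) ^ 2 + (ℓ : ℂ) - 1)
    (hσ : σ = 1 + w)
    (H : ℂ → ℂ) (hH : H = fun z : ℂ => 1 - ((ℓ : ℂ) * ((ℓ : ℂ) + 1) / 3) * z) :
    σ = (ℓ : ℂ) ^ 2 + (ℓ : ℂ) ∧
    ∀ z : ℂ, z ≠ 0 → z ≠ 1 →
      deriv (deriv H) z + (4 * p + γ / z + δ / (z - 1)) * deriv H z
        + (4 * α * p * z - σ) / (z * (z - 1)) * H z = 0 := by
  have hσℓ : σ = (ℓ : ℂ) ^ 2 + ℓ := by rw [hσ, hw']; ring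
  refine ⟨hσℓ, fun z hz0 hz1 => ?_⟩
  have hHσ : H = fun z => 1 - σ / 3 * z := by rw [hH, hσℓ]; ring_nf
  -- `σ - 2 = (ℓ - 1)(ℓ + 2)` and `σ = ℓ(ℓ + 1)`
  have hpσ : 12 * p = σ * (σ - 2) := by
    rw [hp, hΩ, hσℓ]; linear_combination (-(ℓ : ℂ) ^ 4 - 2 * ℓ ^ 3 + ℓ ^ 2 + 2 * ℓ) * I_sq
  have hδp : δ = -1 + 4 * p := by rw [hδ, hp, mul_assoc]
  rw [hHσ, hα, hγ, hδp]
  exact confluentHeunLHS_one_sub_mul_eq_zero hpσ hz0 hz1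

/-- H(z) = 1 - (ℓ(ℓ+1)/3) z satisfies the nonsymmetrical canonical confluent Heun
equation with parameters p = iΩ̄, α = -1, γ = 3, δ = -1 + 4iΩ̄,
σ = 1 + √(1+12iΩ̄) = ℓ² + ℓ, where Ω̄ = -(i/12)(ℓ-1)ℓ(ℓ+1)(ℓ+2). -/
theorem stmt_11 (ℓ : ℕ) (hℓ : 2 ≤ ℓ) (Ω p α γ δ σ w : ℂ)
    (hΩ : Ω = -(I / 12) * ((ℓ : ℂ) - 1) * (ℓ : ℂ) * ((ℓ : ℂ) + 1) * ((ℓ : ℂ) + 2))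
    (hp : p = I * Ω) (hα : α = -1) (hγ : γ = 3) (hδ : δ = -1 + 4 * I * Ω)
    (hw : w ^ 2 = 1 + 12 * I * Ω) (hw' : w = (ℓ : ℂ) ^ 2 + (ℓ : ℂ) - 1)
    (hσ : σ = 1 + w)
    (H : ℂ → ℂ) (hH : H = fun z : ℂ => 1 - ((ℓ : ℂ) * ((ℓ : ℂ) + 1) / 3) * z) :
    σ = (ℓ : ℂ) ^ 2 + (ℓ : ℂ) ∧
    ∀ z : ℂ, z ≠ 0 → z ≠ 1 →
      deriv (deriv H) z + (4 * p + γ / z + δ / (z - 1)) * deriv H z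
        + (4 * α * p * z - σ) / (z * (z - 1)) * H z = 0 :=
  stmt_11_general ℓ Ω p α γ δ σ w hΩ hp hα hγ hδ hw' hσ H hH
end
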